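/- Let V(x) = R_y(x) = cos(x/2)I − i sin(x/2)σ_y, |ψ⟩ = |0⟩, and |Ψ_f⟩ = Σ_{j⃗} p(j⃗)|j⃗⟩ ⊗ V(x_{n,j_n})⋯V(x_{1,j_1})|0⟩ with Σ p(j⃗)² = 1. Decompose |Ψ_f⟩ = |Ψ_0⟩ + |Ψ_1⟩ by projecting the data qubit onto |0⟩ and |1⟩. Then |Ψ_1⟩ = Σ_{j⃗} p(j⃗) sin(½ Σ_l x_{l,j_l}) |j⃗⟩|1⟩, and a := ⟨Ψ_1|Ψ_1⟩ satisfies E[cos(S_n)] = 1 − 2a. -/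
import Mathlib

open Matrix

/-- The single-qubit rotation `R_y(x) = cos(x/2) I - i sin(x/2) σ_y`. -/
noncomputable def Ry (x : ℝ) : Matrix (Fin 2) (Fin 2) ℂ :=
  !![(Real.cos (x / 2) : ℂ), -(Real.sin (x / 2) : ℂ);
     (Real.sin (x / 2) : ℂ), (Real.cos (x / 2) : ℂ)]

/-- The computational basis state `|0⟩`. -/
def ket0 : Fin 2 → ℂ := ![1, 0]

lemma Ry_mul (a b : ℝ) : Ry a * Ry b = Ry (a + b) := by
  have h : (a + b) / 2 = a / 2 + b / 2 := by ring
  simp only [Ry, h]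
  ext i j
  fin_cases i <;> fin_cases j <;>
    simp [Matrix.mul_apply, Fin.sum_univ_two, Real.cos_add, Real.sin_add] <;> ring

lemma prod_Ry (L : List ℝ) : (L.map Ry).prod = Ry L.sum := by
  induction L with
  | nil =>
    simp [Ry]
    ext i j
    fin_cases i <;> fin_cases j <;> simp [Matrix.one_apply]
  | cons a L ih => simp [ih, Ry_mul]

/-- with `V(x) = R_y(x)` and input `|0⟩`, the `|1⟩`-projected branch of
`|Ψ_f⟩` carries amplitudes `p(j) sin(S_n(j)/2)`, and `a = ⟨Ψ_1|Ψ_1⟩` satisfies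
`E[cos S_n] = 1 - 2a`. -/
theorem amplitude_estimation_cos
    (n k : ℕ)
    (x : Fin n → Fin k → ℝ)
    (p : (Fin n → Fin k) → ℝ)
    (hp : ∑ j : Fin n → Fin k, (p j) ^ 2 = 1)
    (Ψf : (Fin n → Fin k) × Fin 2 → ℂ)
    (hΨf : ∀ j a, Ψf (j, a) =
      (p j : ℂ) * (((List.ofFn fun l : Fin n => Ry (x l (j l))).reverse.prod) *ᵥ ket0) a)
    (Ψ1 : (Fin n → Fin k) × Fin 2 → ℂ)
    (hΨ1 : ∀ j a, Ψ1 (j, a) = if a = 1 then Ψf (j, a) else 0) :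
    (∀ j a, Ψ1 (j, a) =
      if a = 1 then ((p j * Real.sin ((∑ l : Fin n, x l (j l)) / 2) : ℝ) : ℂ) else 0)
    ∧ ∑ j : Fin n → Fin k, (p j) ^ 2 * Real.cos (∑ l : Fin n, x l (j l))
        = 1 - 2 * ∑ z : (Fin n → Fin k) × Fin 2, ‖Ψ1 z‖ ^ 2 := by
  have key : ∀ j : Fin n → Fin k,
      ((List.ofFn fun l : Fin n => Ry (x l (j l))).reverse.prod)
        = Ry (∑ l : Fin n, x l (j l)) := by
    intro j
    have h1 : (List.ofFn fun l : Fin n => Ry (x l (j l)))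
        = (List.ofFn fun l : Fin n => x l (j l)).map Ry := by
      simp [List.map_ofFn]; rfl
    rw [h1, ← List.map_reverse, prod_Ry, List.sum_reverse, List.sum_ofFn]
  have hΨ1' : ∀ j a, Ψ1 (j, a) =
      if a = 1 then ((p j * Real.sin ((∑ l : Fin n, x l (j l)) / 2) : ℝ) : ℂ) else 0 := by
    intro j a
    rw [hΨ1]
    split
    · rename_i ha
      subst ha
      rw [hΨf, key]
      simp [Ry, Matrix.mulVec, dotProduct, ket0, Fin.sum_univ_two]
    · rfl
  refine ⟨hΨ1', ?_⟩
  have hsum : ∑ z : (Fin n → Fin k) × Fin 2, ‖Ψ1 z‖ ^ 2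
      = ∑ j : Fin n → Fin k, (p j) ^ 2 * Real.sin ((∑ l : Fin n, x l (j l)) / 2) ^ 2 := by
    rw [Fintype.sum_prod_type]
    refine Finset.sum_congr rfl fun j _ => ?_
    rw [Fin.sum_univ_two, hΨ1' j 0, hΨ1' j 1]
    rw [if_neg (by decide), if_pos rfl, norm_zero, Complex.norm_real]
    rw [Real.norm_eq_abs, sq_abs]; ring
  rw [hsum]
  have : ∀ j : Fin n → Fin k,
      (p j) ^ 2 * Real.cos (∑ l : Fin n, x l (j l))
        = (p j) ^ 2 - 2 * ((p j) ^ 2 * Real.sin ((∑ l : Fin n, x l (j l)) / 2) ^ 2) := by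
    intro j
    set S := ∑ l : Fin n, x l (j l)
    have h : Real.cos S = 1 - 2 * Real.sin (S / 2) ^ 2 := by
      have h1 := Real.cos_two_mul (S / 2)
      rw [show 2 * (S / 2) = S by ring] at h1
      nlinarith [Real.sin_sq_add_cos_sq (S / 2)]
    rw [h]; ring
  rw [Finset.sum_congr rfl fun j _ => this j, Finset.sum_sub_distrib, hp,
    ← Finset.mul_sum]
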